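/- arXiv:1606.00730 — 2 statements merged into one kernel-verified Lean document; each statement's English description precedes it below -/
import Mathlib

section
/- Suppose (C₁,…,C_m) is a partition of {1,…,3m} with |C_ℓ| = 3 and Σ_{i ∈ C_ℓ} αᵢ = W for each ℓ, where W/4 < αᵢ < W/2. Then the bipartite gadget graph built from this partition (atoms–weight points–basket points) realizes the prescribed second order degree sequence: each atom attached to weight point i has (d, d₂) = (1, αᵢ), each weight point i has (d, d₂) = (αᵢ+1, 2), and each basket point has (d, d₂) = (3, W). -/
/-!
Encode the partition as the map `p` sending `i` to the index of its block; then every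
neighbourhood and every set at distance two in the gadget is explicit. An atom of `i` reaches
the other atoms of `i` and the basket `p i`; a weight point `i` reaches the two other weight
points of its block; a basket `ℓ` reaches all atoms of the weight points in `C ℓ`. The counts
are then `αᵢ - 1 + 1`, `3 - 1` and `Σ_{i ∈ C ℓ} αᵢ = W`.
-/

open SimpleGraph Finset

/-- The bipartite gadget graph for the 3-Partition reduction: for each `i` there are
`α i` atoms joined only to the weight point `i`; the basket point `ℓ` is joined
exactly to the weight points `i` with `i ∈ C ℓ`. -/
def gadget (m : ℕ) (α : Fin (3 * m) → ℕ) (C : Fin m → Finset (Fin (3 * m))) :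
    SimpleGraph ((Σ i : Fin (3 * m), Fin (α i)) ⊕ (Fin (3 * m) ⊕ Fin m)) :=
  SimpleGraph.fromRel (fun x y =>
    match x, y with
    | Sum.inl ⟨i, _⟩, Sum.inr (Sum.inl i') => i = i'
    | Sum.inr (Sum.inl i), Sum.inr (Sum.inr ℓ) => i ∈ C ℓ
    | _, _ => False)

namespace SimpleGraph

theorem dist_eq_two_iff {V : Type*} {G : SimpleGraph V} {u v : V} :
    G.dist u v = 2 ↔ u ≠ v ∧ ¬G.Adj u v ∧ ∃ w, G.Adj u w ∧ G.Adj w v := by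
  rw [dist, ENat.toNat_eq_iff two_ne_zero, Nat.cast_ofNat, edist_eq_two_iff]
  simp only [Set.Nonempty, mem_commonNeighbors, G.adj_comm v]

end SimpleGraph

theorem Set.ncard_setOf_sigma_fst_mem {ι : Type*} {β : ι → Type*} [∀ i, Fintype (β i)]
    (s : Finset ι) : {q : Σ i, β i | q.1 ∈ s}.ncard = ∑ i ∈ s, Fintype.card (β i) := by
  have : {q : Σ i, β i | q.1 ∈ s} = ↑(s.sigma fun i => (Finset.univ : Finset (β i))) := by
    ext; simp
  rw [this, ncard_coe_finset, card_sigma]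
  simp

namespace gadget

variable {m : ℕ} {α : Fin (3 * m) → ℕ} {C : Fin m → Finset (Fin (3 * m))}
  {p : Fin (3 * m) → Fin m}

theorem neighborSet_inl (i : Fin (3 * m)) (a : Fin (α i)) :
    (gadget m α C).neighborSet (Sum.inl ⟨i, a⟩) = {Sum.inr (Sum.inl i)} := by
  ext (⟨j, b⟩ | j | ℓ) <;> simp [gadget, eq_comm]

theorem neighborSet_inr_inl (hC : ∀ {i ℓ}, i ∈ C ℓ ↔ p i = ℓ) (i : Fin (3 * m)) :
    (gadget m α C).neighborSet (Sum.inr (Sum.inl i)) =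
      insert (Sum.inr (Sum.inr (p i))) (Set.range fun a => Sum.inl ⟨i, a⟩) := by
  ext (⟨j, b⟩ | j | ℓ)
  · rcases eq_or_ne j i with rfl | hj
    · simp [gadget]
    · simp [gadget, hj, hj.symm]
  all_goals simp [gadget, hC, eq_comm]

theorem neighborSet_inr_inr (ℓ : Fin m) :
    (gadget m α C).neighborSet (Sum.inr (Sum.inr ℓ)) =
      (fun i => Sum.inr (Sum.inl i)) '' C ℓ := by
  ext (⟨j, b⟩ | j | ℓ') <;> simp [gadget]

theorem setOf_dist_eq_two_inl (hC : ∀ {i ℓ}, i ∈ C ℓ ↔ p i = ℓ) (i : Fin (3 * m))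
    (a : Fin (α i)) :
    {u | (gadget m α C).dist (Sum.inl ⟨i, a⟩) u = 2} =
      insert (Sum.inr (Sum.inr (p i))) ((fun b => Sum.inl ⟨i, b⟩) '' {a}ᶜ) := by
  ext (⟨j, b⟩ | j | ℓ) <;> simp only [Set.mem_ofPred_eq, dist_eq_two_iff]
  · rcases eq_or_ne j i with rfl | hj
    · simp [gadget, Sum.exists, eq_comm]
    · simp [gadget, Sum.exists, hj, hj.symm]
  all_goals simp [gadget, Sum.exists, hC, eq_comm]

theorem setOf_dist_eq_two_inr_inl (hC : ∀ {i ℓ}, i ∈ C ℓ ↔ p i = ℓ) (i : Fin (3 * m)) :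
    {u | (gadget m α C).dist (Sum.inr (Sum.inl i)) u = 2} =
      (fun j => Sum.inr (Sum.inl j)) '' ↑((C (p i)).erase i) := by
  ext (⟨j, b⟩ | j | ℓ) <;> simp only [Set.mem_ofPred_eq, dist_eq_two_iff] <;>
    simp [gadget, Sum.exists, hC]
  all_goals grind

theorem setOf_dist_eq_two_inr_inr (hC : ∀ {i ℓ}, i ∈ C ℓ ↔ p i = ℓ) (ℓ : Fin m) :
    {u | (gadget m α C).dist (Sum.inr (Sum.inr ℓ)) u = 2} = Sum.inl '' {q | q.1 ∈ C ℓ} := by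
  ext (⟨j, b⟩ | j | ℓ') <;> simp only [Set.mem_ofPred_eq, dist_eq_two_iff] <;>
    simp [gadget, Sum.exists, hC]
  all_goals grind

end gadget

theorem stmt16_general (m W : ℕ) (α : Fin (3 * m) → ℕ) (C : Fin m → Finset (Fin (3 * m)))
    (hpart : ∀ i, ∃! ℓ, i ∈ C ℓ)
    (hcard : ∀ ℓ, (C ℓ).card = 3) (hsum : ∀ ℓ, ∑ i ∈ C ℓ, α i = W) :
    (∀ i : Fin (3 * m), ∀ a : Fin (α i),
      ((gadget m α C).neighborSet (Sum.inl ⟨i, a⟩)).ncard = 1 ∧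
      {u | (gadget m α C).dist (Sum.inl ⟨i, a⟩) u = 2}.ncard = α i) ∧
    (∀ i : Fin (3 * m),
      ((gadget m α C).neighborSet (Sum.inr (Sum.inl i))).ncard = α i + 1 ∧
      {u | (gadget m α C).dist (Sum.inr (Sum.inl i)) u = 2}.ncard = 2) ∧
    (∀ ℓ : Fin m,
      ((gadget m α C).neighborSet (Sum.inr (Sum.inr ℓ))).ncard = 3 ∧
      {u | (gadget m α C).dist (Sum.inr (Sum.inr ℓ)) u = 2}.ncard = W) := by
  obtain ⟨p, hC⟩ := forall_existsUnique_iff.mp hpart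
  have atom_injective (i) : Function.Injective fun b : Fin (α i) =>
      (Sum.inl ⟨i, b⟩ : (Σ i, Fin (α i)) ⊕ (Fin (3 * m) ⊕ Fin m)) :=
    Sum.inl_injective.comp sigma_mk_injective
  have weight_injective : Function.Injective fun i : Fin (3 * m) =>
      (Sum.inr (Sum.inl i) : (Σ i, Fin (α i)) ⊕ (Fin (3 * m) ⊕ Fin m)) :=
    Sum.inr_injective.comp Sum.inl_injective
  refine ⟨fun i a => ⟨?_, ?_⟩, fun i => ⟨?_, ?_⟩, fun ℓ => ⟨?_, ?_⟩⟩
  · rw [gadget.neighborSet_inl, Set.ncard_singleton]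
  · rw [gadget.setOf_dist_eq_two_inl hC, Set.ncard_insert_of_notMem (by simp),
      Set.ncard_image_of_injective _ (atom_injective i), Set.ncard_compl, Set.ncard_singleton,
      Nat.card_fin]
    have := a.pos
    omega
  · rw [gadget.neighborSet_inr_inl hC, Set.ncard_insert_of_notMem (by simp),
      Set.ncard_range_of_injective (atom_injective i), Nat.card_fin]
  · rw [gadget.setOf_dist_eq_two_inr_inl hC, Set.ncard_image_of_injective _ weight_injective,
      Set.ncard_coe_finset, card_erase_of_mem (hC.mpr rfl), hcard]
  · rw [gadget.neighborSet_inr_inr, Set.ncard_image_of_injective _ weight_injective,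
      Set.ncard_coe_finset, hcard]
  · rw [gadget.setOf_dist_eq_two_inr_inr hC, Set.ncard_image_of_injective _ Sum.inl_injective,
      Set.ncard_setOf_sigma_fst_mem]
    simp only [Fintype.card_fin, hsum]

theorem stmt16 (m W : ℕ) (α : Fin (3 * m) → ℕ) (C : Fin m → Finset (Fin (3 * m)))
    (hpart : ∀ i, ∃! ℓ, i ∈ C ℓ)
    (hcard : ∀ ℓ, (C ℓ).card = 3) (hsum : ∀ ℓ, ∑ i ∈ C ℓ, α i = W)
    (hlb : ∀ i, W < 4 * α i) (hub : ∀ i, 2 * α i < W) :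
    (∀ i : Fin (3 * m), ∀ a : Fin (α i),
      ((gadget m α C).neighborSet (Sum.inl ⟨i, a⟩)).ncard = 1 ∧
      {u | (gadget m α C).dist (Sum.inl ⟨i, a⟩) u = 2}.ncard = α i) ∧
    (∀ i : Fin (3 * m),
      ((gadget m α C).neighborSet (Sum.inr (Sum.inl i))).ncard = α i + 1 ∧
      {u | (gadget m α C).dist (Sum.inr (Sum.inl i)) u = 2}.ncard = 2) ∧
    (∀ ℓ : Fin m,
      ((gadget m α C).neighborSet (Sum.inr (Sum.inr ℓ))).ncard = 3 ∧
      {u | (gadget m α C).dist (Sum.inr (Sum.inr ℓ)) u = 2}.ncard = W) :=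
  stmt16_general m W α C hpart hcard hsum
end

section
/- If every instance of the Basket Filling problem with all basket capacities c_ℓ ≥ 2 and parameters satisfying wᵢ+1 ≠ c_j and wᵢ+1 ≠ n+k−1 is transformed by multiplying every wᵢ and every s_j by N = (n+k)·max_ℓ c_ℓ, then the original instance has a solution if and only if the scaled instance has a solution, and the scaled instance satisfies wᵢ'+1 ≠ c_j and wᵢ'+1 ≠ n+k−1 for all i, j. -/
/-
Scaling weights and basket sums by the same `N ≠ 0` does not change the solutions, since the
factor cancels from every basket sum. As `k ≥ 1` and `c ℓ ≥ 2`, `N = (n + k) * max c` is at least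
both `c j` and `n + k - 1`, while every scaled weight is at least `N`.
-/

open Finset

/-- A solution of the Basket Filling problem: an ordered partition `C` of the items
with prescribed class cardinalities `c` and prescribed class weight sums `s`. -/
def BasketFillingSolution {n k : ℕ} (w : Fin n → ℕ) (c s : Fin k → ℕ)
    (C : Fin k → Finset (Fin n)) : Prop :=
  (∀ i, ∃! ℓ, i ∈ C ℓ) ∧ ∀ ℓ, (C ℓ).card = c ℓ ∧ ∑ i ∈ C ℓ, w i = s ℓ

theorem basketFillingSolution_mul_iff {n k : ℕ} (w : Fin n → ℕ) (c s : Fin k → ℕ)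
    (C : Fin k → Finset (Fin n)) {N : ℕ} (hN : N ≠ 0) :
    BasketFillingSolution (fun i => N * w i) c (fun ℓ => N * s ℓ) C ↔
      BasketFillingSolution w c s C := by
  simp only [BasketFillingSolution, ← mul_sum, Nat.mul_left_cancel_iff (Nat.pos_of_ne_zero hN)]

theorem mul_add_one_ne_of_le {N m w : ℕ} (hm : m ≤ N) (hw : 0 < w) : N * w + 1 ≠ m := by
  have : N ≤ N * w := Nat.le_mul_of_pos_right N hw
  omega

theorem stmt17_general (n k : ℕ) (hk : 0 < k) (w : Fin n → ℕ) (c s : Fin k → ℕ)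
    (hw : ∀ i, 0 < w i) (hc : ∀ ℓ, 2 ≤ c ℓ)
    (N : ℕ) (hN : N = (n + k) * Finset.univ.sup c) :
    ((∃ C : Fin k → Finset (Fin n), BasketFillingSolution w c s C) ↔
      (∃ C : Fin k → Finset (Fin n),
        BasketFillingSolution (fun i => N * w i) c (fun ℓ => N * s ℓ) C)) ∧
    (∀ i j, N * w i + 1 ≠ c j) ∧ (∀ i, N * w i + 1 ≠ n + k - 1) := by
  have hsup : 2 ≤ univ.sup c := (hc ⟨0, hk⟩).trans (le_sup (mem_univ _))
  have hsup_le : univ.sup c ≤ N := hN ▸ Nat.le_mul_of_pos_left _ (by omega)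
  have hnk_le : n + k ≤ N := hN ▸ Nat.le_mul_of_pos_right _ (by omega)
  refine ⟨?_, fun i j => ?_, fun i => ?_⟩
  · have hN0 : N ≠ 0 := by omega
    exact exists_congr fun C => (basketFillingSolution_mul_iff w c s C hN0).symm
  · exact mul_add_one_ne_of_le ((le_sup (mem_univ j)).trans hsup_le) (hw i)
  · exact mul_add_one_ne_of_le (by omega) (hw i)

theorem stmt17 (n k : ℕ) (hk : 0 < k) (w : Fin n → ℕ) (c s : Fin k → ℕ)
    (hw : ∀ i, 0 < w i) (hc : ∀ ℓ, 2 ≤ c ℓ)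
    (hcn : ∑ ℓ, c ℓ = n) (hsM : ∑ ℓ, s ℓ = ∑ i, w i)
    (N : ℕ) (hN : N = (n + k) * Finset.univ.sup c) :
    ((∃ C : Fin k → Finset (Fin n), BasketFillingSolution w c s C) ↔
      (∃ C : Fin k → Finset (Fin n),
        BasketFillingSolution (fun i => N * w i) c (fun ℓ => N * s ℓ) C)) ∧
    (∀ i j, N * w i + 1 ≠ c j) ∧ (∀ i, N * w i + 1 ≠ n + k - 1) :=
  stmt17_general n k hk w c s hw hc N hN
end
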